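/- Let C be a symmetric monoidal category and N : FinType → C a symmetric lax monoidal functor satisfying the nerve condition. Then H := N(Fin 2), equipped with the product μ, unit, coproduct Δ, counit ε and antipode S described below, is a Hopf monoid in C whose underlying monoid is commutative. -/

import Mathlib

open CategoryTheory CategoryTheory.Limits MonoidalCategory CategoryTheory.Functor.LaxMonoidal

noncomputable local instance fintypeCatMonoidal : MonoidalCategory FintypeCat.{0} :=
  monoidalOfHasFiniteCoproducts FintypeCat

noncomputable local instance fintypeCatSymmetric : SymmetricCategory FintypeCat.{0} :=
  symmetricOfHasFiniteCoproducts FintypeCat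

variable {C : Type*} [Category C] [MonoidalCategory C] [SymmetricCategory C]

/-- `H := N(Fin 2)`. -/
noncomputable def nerveH (N : LaxBraidedFunctor FintypeCat.{0} C) : C :=
  N.obj (FintypeCat.of (Fin 2))

/-- The tensor powers `H^{⊗m}` of `H := N(Fin 2)`. -/
noncomputable def nervePow (N : LaxBraidedFunctor FintypeCat.{0} C) : ℕ → C
  | 0 => 𝟙_ C
  | 1 => nerveH N
  | m + 2 => nerveH N ⊗ nervePow N (m + 1)

/-- `φ_0 : Fin 2 → Fin (m+2)`, the inclusion. -/
def phiZero (m : ℕ) : FintypeCat.of (Fin 2) ⟶ FintypeCat.of (Fin (m + 2)) :=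
  FintypeCat.homMk fun j => ⟨j.1, by omega⟩

/-- The shift `Fin (m+1) → Fin (m+2)`, `j ↦ j + 1`. -/
def shiftMap (m : ℕ) : FintypeCat.of (Fin (m + 1)) ⟶ FintypeCat.of (Fin (m + 2)) :=
  FintypeCat.homMk fun j => ⟨j.1 + 1, by omega⟩

/-- The gluing map `Fin 2 ⊔ Fin (m+1) → Fin (m+2)` restricting to `φ_0` on the first
summand and to the shift on the second; iterating it produces the maps `g_n` which
restrict to `φ_i` on the `(i+1)`-st summand. -/
noncomputable def glueMap (m : ℕ) :
    FintypeCat.of (Fin 2) ⊗ FintypeCat.of (Fin (m + 1)) ⟶ FintypeCat.of (Fin (m + 2)) :=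
  coprod.desc (phiZero m) (shiftMap m)

/-- The Segal morphism `Seg_{m+1} : H^{⊗m} → N(Fin (m+1))`: the iterated coherence
morphism `H^{⊗m} → N(Fin 2 ⊔ ⋯ ⊔ Fin 2)` followed by `N(g_{m+1})`.
For `m = 0` it is the composite `1_C → N(∅) → N(Fin 1)` of `c_1` with `N(∅ → Fin 1)`. -/
noncomputable def nerveSeg (N : LaxBraidedFunctor FintypeCat.{0} C) :
    (m : ℕ) → (nervePow N m ⟶ N.obj (FintypeCat.of (Fin (m + 1))))
  | 0 => ε N.toFunctor ≫ N.map (initial.to (FintypeCat.of (Fin 1)))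
  | 1 => 𝟙 (nerveH N)
  | m + 2 =>
      (nerveH N ◁ nerveSeg N (m + 1)) ≫
        μ N.toFunctor (FintypeCat.of (Fin 2)) (FintypeCat.of (Fin (m + 2))) ≫
        N.map (glueMap (m + 1))

/-- The nerve condition for a braided lax monoidal functor `N : FinType ⥤ C`:
all Segal morphisms `Seg_n` (`n ≥ 2`) are isomorphisms, and the composite
`1_C → N(∅) → N(Fin 1)` is an isomorphism. -/
def NerveCondBr (N : LaxBraidedFunctor FintypeCat.{0} C) : Prop :=
  ∀ m : ℕ, IsIso (nerveSeg N m)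

/-- The product `μ : H ⊗ H → H`: the coherence morphism `c_{Fin 2, Fin 2}` followed by
`N(q)`, where `q : Fin 2 ⊔ Fin 2 → Fin 2` is the identity on each summand. -/
noncomputable def nerveMul (N : LaxBraidedFunctor FintypeCat.{0} C) :
    nerveH N ⊗ nerveH N ⟶ nerveH N :=
  μ N.toFunctor (FintypeCat.of (Fin 2)) (FintypeCat.of (Fin 2)) ≫
    N.map (coprod.desc (𝟙 (FintypeCat.of (Fin 2))) (𝟙 (FintypeCat.of (Fin 2))))

/-- The unit `1_C → N(∅) → H`. -/
noncomputable def nerveOne (N : LaxBraidedFunctor FintypeCat.{0} C) : 𝟙_ C ⟶ nerveH N :=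
  ε N.toFunctor ≫ N.map (initial.to (FintypeCat.of (Fin 2)))

/-- `d : Fin 2 → Fin 3`, `0 ↦ 0`, `1 ↦ 2`. -/
def dMap : FintypeCat.of (Fin 2) ⟶ FintypeCat.of (Fin 3) :=
  FintypeCat.homMk fun j => ⟨2 * j.1, by omega⟩

/-- The coproduct `Δ := Seg_3⁻¹ ∘ N(d) : H → H ⊗ H`. -/
noncomputable def nerveComul (N : LaxBraidedFunctor FintypeCat.{0} C)
    (hN : NerveCondBr N) : nerveH N ⟶ nerveH N ⊗ nerveH N := by
  haveI : IsIso (nerveSeg N 2) := hN 2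
  exact N.map dMap ≫ (inv (nerveSeg N 2) : _ ⟶ nervePow N 2)

/-- The fold map `∇ : Fin 2 → Fin 1`. -/
def nablaMap : FintypeCat.of (Fin 2) ⟶ FintypeCat.of (Fin 1) :=
  FintypeCat.homMk fun _ => (0 : Fin 1)

/-- The counit `ε : H → 1_C`: `N(∇)` followed by the inverse of the isomorphism
`1_C ≅ N(Fin 1)`. -/
noncomputable def nerveCounit (N : LaxBraidedFunctor FintypeCat.{0} C)
    (hN : NerveCondBr N) : nerveH N ⟶ 𝟙_ C := by
  haveI : IsIso (nerveSeg N 0) := hN 0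
  exact N.map nablaMap ≫ (inv (nerveSeg N 0) : _ ⟶ nervePow N 0)

/-- The transposition `s : Fin 2 → Fin 2`. -/
def sMap : FintypeCat.of (Fin 2) ⟶ FintypeCat.of (Fin 2) :=
  FintypeCat.homMk fun j => ⟨1 - j.1, by omega⟩

/-- The antipode `S := N(s) : H → H`. -/
noncomputable def nerveAntipode (N : LaxBraidedFunctor FintypeCat.{0} C) :
    nerveH N ⟶ nerveH N :=
  N.map sMap

/-! In the coproduct monoidal structure every finite set is a commutative monoid under the fold
map, and every map of finite sets is a monoid map. A lax braided functor preserves all of this, so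
`H = N(Fin 2)` is a commutative monoid and the Segal maps `Seg₂ = μ ≫ N(g)` and
`Seg₀ = ε ≫ N(∅ → Fin 1)` are monoid isomorphisms; hence `Δ = Seg₂⁻¹ ∘ N(d)` and the counit
`Seg₀⁻¹ ∘ N(∇)` are monoid maps, which are exactly the bimonoid axioms. Coassociativity,
counitality and the antipode identities are checked after composing with the isomorphisms `Seg₃`,
`Seg₂` or `Seg₀`: by naturality of the lax structure both sides become `N` applied to maps of finite
sets, and these agree (e.g. `d` followed by `(0,1,3)` or by `(0,2,3)`). -/

section CodiagonalMonoid

universe v u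

variable {D : Type u} [Category.{v} D] [HasInitial D] [HasBinaryCoproducts D]

attribute [local instance] monoidalOfHasFiniteCoproducts symmetricOfHasFiniteCoproducts

noncomputable abbrev codiagonalMonObj (X : D) : MonObj X where
  one := initial.to X
  mul := codiag X
  one_mul := by
    change coprod.map (initial.to X) (𝟙 X) ≫ codiag X = coprod.desc (initial.to X) (𝟙 X)
    simp
  mul_one := by
    change coprod.map (𝟙 X) (initial.to X) ≫ codiag X = coprod.desc (𝟙 X) (initial.to X)
    simp
  mul_assoc := by
    change coprod.map (codiag X) (𝟙 X) ≫ codiag X =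
      (coprod.associator X X X).hom ≫ coprod.map (𝟙 X) (codiag X) ≫ codiag X
    ext <;> simp [coprod.inl_desc, coprod.inr_desc]

variable {M M' : D} [MonObj M] [MonObj M']

lemma isCommMonObj_of_mul_eq_codiag (hM : MonObj.mul = codiag M) : IsCommMonObj M where
  mul_comm := by
    change (coprod.braiding M M).hom ≫ MonObj.mul = MonObj.mul
    rw [hM]
    ext <;> simp [coprod.inl_desc, coprod.inr_desc]

lemma isMonHom_of_mul_eq_codiag (hM : MonObj.mul = codiag M) (hM' : MonObj.mul = codiag M')
    (f : M ⟶ M') : IsMonHom f where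
  one_hom := initial.hom_ext _ _
  mul_hom := by
    rw [hM, hM']
    exact (coprod.map_codiag f).symm

lemma tensorObj_mul_eq_codiag (hM : MonObj.mul = codiag M) (hM' : MonObj.mul = codiag M') :
    MonObj.mul = codiag (M ⊗ M') := by
  change (tensorμ M M' M M' ≫ coprod.map MonObj.mul MonObj.mul : (M ⨿ M') ⨿ (M ⨿ M') ⟶ M ⨿ M') =
    codiag (M ⨿ M')
  rw [hM, hM']
  ext <;> simp [tensorμ, coprod.inl_desc, coprod.inr_desc,
    monoidalOfHasFiniteCoproducts.associator_hom, monoidalOfHasFiniteCoproducts.associator_inv,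
    monoidalOfHasFiniteCoproducts.whiskerLeft, monoidalOfHasFiniteCoproducts.whiskerRight]

end CodiagonalMonoid

section MonoidHom

variable {D : Type*} [Category D] [MonoidalCategory D] {M M' : D} [MonObj M] [MonObj M']

lemma isMonHom_one : IsMonHom (MonObj.one : 𝟙_ D ⟶ M) where
  mul_hom := by simp [unitors_equal]

lemma isMonHom_inv (f : M ⟶ M') [IsIso f] [IsMonHom f] : IsMonHom (inv f) :=
  inferInstanceAs (IsMonHom (asIso f).inv)

end MonoidHom

section UnitAction

variable {C₁ C₂ : Type*} [Category C₁] [Category C₂] [MonoidalCategory C₁] [MonoidalCategory C₂]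
  (F : C₁ ⥤ C₂) [F.LaxMonoidal] {U X : C₁} (u : 𝟙_ C₁ ⟶ U) [IsIso (ε F ≫ F.map u)]

lemma whiskerRight_inv_comp_leftUnitor_hom (w : U ⊗ X ⟶ X) (hw : u ▷ X ≫ w = (λ_ X).hom) :
    inv (ε F ≫ F.map u) ▷ F.obj X ≫ (λ_ (F.obj X)).hom = μ F U X ≫ F.map w := by
  rw [← cancel_epi ((ε F ≫ F.map u) ▷ F.obj X), ← comp_whiskerRight_assoc, IsIso.hom_inv_id,
    id_whiskerRight, Category.id_comp, comp_whiskerRight_assoc, μ_natural_left_assoc,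
    ← F.map_comp, hw, left_unitality]

lemma whiskerLeft_inv_comp_rightUnitor_hom (w : X ⊗ U ⟶ X) (hw : X ◁ u ≫ w = (ρ_ X).hom) :
    F.obj X ◁ inv (ε F ≫ F.map u) ≫ (ρ_ (F.obj X)).hom = μ F X U ≫ F.map w := by
  rw [← cancel_epi (F.obj X ◁ (ε F ≫ F.map u)), ← MonoidalCategory.whiskerLeft_comp_assoc,
    IsIso.hom_inv_id, MonoidalCategory.whiskerLeft_id, Category.id_comp,
    MonoidalCategory.whiskerLeft_comp_assoc, μ_natural_right_assoc, ← F.map_comp, hw,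
    right_unitality]

end UnitAction

local notation "[" n "]ᶠ" => FintypeCat.of (Fin n)

noncomputable instance (n : ℕ) : MonObj [n]ᶠ := codiagonalMonObj _

instance (n : ℕ) : IsCommMonObj [n]ᶠ := isCommMonObj_of_mul_eq_codiag rfl

instance {m n : ℕ} (f : [m]ᶠ ⟶ [n]ᶠ) : IsMonHom f := isMonHom_of_mul_eq_codiag rfl rfl f

instance (m : ℕ) : IsMonHom (glueMap m) :=
  isMonHom_of_mul_eq_codiag (tensorObj_mul_eq_codiag rfl rfl) rfl _

lemma fin_mul_eq_codiag (n : ℕ) : (MonObj.mul : [n]ᶠ ⊗ [n]ᶠ ⟶ [n]ᶠ) = codiag [n]ᶠ := rfl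

abbrev finMap {m : ℕ} (n : ℕ) (f : Fin m → Fin n) : [m]ᶠ ⟶ [n]ᶠ := FintypeCat.homMk f

noncomputable def glueMapRight : [3]ᶠ ⊗ [2]ᶠ ⟶ [4]ᶠ :=
  coprod.desc (finMap 4 ![0, 1, 2]) (finMap 4 ![2, 3])

open scoped Obj

section SegalComonoid

variable {D : Type*} [Category D] [MonoidalCategory D] {F : FintypeCat.{0} ⥤ D} [F.LaxMonoidal]
  {Δ : F.obj [2]ᶠ ⟶ F.obj [2]ᶠ ⊗ F.obj [2]ᶠ} {counit : F.obj [2]ᶠ ⟶ 𝟙_ D}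

lemma comul_comp_μ_comp_map (hΔ : Δ ≫ μ F [2]ᶠ [2]ᶠ ≫ F.map (glueMap 1) = F.map dMap)
    {X : FintypeCat} {g : [2]ᶠ ⊗ [2]ᶠ ⟶ X} {k : [3]ᶠ ⟶ X} (hk : g = glueMap 1 ≫ k) :
    Δ ≫ μ F _ _ ≫ F.map g = F.map (dMap ≫ k) := by
  rw [hk, F.map_comp, F.map_comp, reassoc_of% hΔ]

lemma comul_assoc_of_segal (hΔ : Δ ≫ μ F [2]ᶠ [2]ᶠ ≫ F.map (glueMap 1) = F.map dMap)
    [IsIso ((F.obj [2]ᶠ ◁ (μ F [2]ᶠ [2]ᶠ ≫ F.map (glueMap 1))) ≫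
      μ F [2]ᶠ [3]ᶠ ≫ F.map (glueMap 2))] :
    Δ ≫ (Δ ▷ F.obj [2]ᶠ) = Δ ≫ (F.obj [2]ᶠ ◁ Δ) ≫ (α_ _ _ _).inv := by
  have hk₁ : ([2]ᶠ ◁ dMap) ≫ glueMap 2 = glueMap 1 ≫ finMap 4 ![0, 1, 3] := by
    apply coprod.hom_ext <;>
      simp [glueMap, monoidalOfHasFiniteCoproducts.whiskerLeft, coprod.inl_desc,
        coprod.inr_desc] <;> ext j <;> fin_cases j <;> rfl
  have hk₂ : (dMap ▷ [2]ᶠ) ≫ glueMapRight = glueMap 1 ≫ finMap 4 ![0, 2, 3] := by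
    apply coprod.hom_ext <;>
      simp [glueMap, glueMapRight, monoidalOfHasFiniteCoproducts.whiskerRight, coprod.inl_desc,
        coprod.inr_desc] <;> ext j <;> fin_cases j <;> rfl
  have hglue : (α_ [2]ᶠ [2]ᶠ [2]ᶠ).hom ≫ ([2]ᶠ ◁ glueMap 1) ≫ glueMap 2 =
      (glueMap 1 ▷ [2]ᶠ) ≫ glueMapRight := by
    refine coprod.hom_ext (coprod.hom_ext ?_ ?_) ?_ <;>
      simp [glueMap, glueMapRight, monoidalOfHasFiniteCoproducts.whiskerRight,
        monoidalOfHasFiniteCoproducts.whiskerLeft, monoidalOfHasFiniteCoproducts.associator_hom,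
        coprod.inl_desc, coprod.inr_desc] <;> ext j <;> fin_cases j <;> rfl
  have hd : dMap ≫ finMap 4 ![0, 2, 3] = dMap ≫ finMap 4 ![0, 1, 3] := by
    ext j; fin_cases j <;> rfl
  rw [← Category.assoc, Iso.eq_comp_inv, ← cancel_mono ((F.obj [2]ᶠ ◁ (μ F [2]ᶠ [2]ᶠ ≫
    F.map (glueMap 1))) ≫ μ F [2]ᶠ [3]ᶠ ≫ F.map (glueMap 2))]
  simp only [Category.assoc]
  conv_rhs => rw [← MonoidalCategory.whiskerLeft_comp_assoc, hΔ, μ_natural_right_assoc,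
    ← F.map_comp, comul_comp_μ_comp_map hΔ hk₁]
  rw [MonoidalCategory.whiskerLeft_comp, Category.assoc, μ_natural_right_assoc,
    ← associativity_assoc, ← F.map_comp, ← F.map_comp, hglue, F.map_comp, ← μ_natural_left_assoc,
    ← comp_whiskerRight_assoc, ← comp_whiskerRight_assoc, Category.assoc, hΔ,
    μ_natural_left_assoc, ← F.map_comp, comul_comp_μ_comp_map hΔ hk₂, hd]

lemma counit_comp_one (hcounit : counit ≫ ε F ≫ F.map MonObj.one = F.map nablaMap)
    (p : [1]ᶠ ⟶ [2]ᶠ) : counit ≫ ε F ≫ F.map MonObj.one = F.map (nablaMap ≫ p) := by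
  rw [← IsMonHom.one_hom p, F.map_comp, reassoc_of% hcounit, F.map_comp]

lemma counit_comul_of_segal (hΔ : Δ ≫ μ F [2]ᶠ [2]ᶠ ≫ F.map (glueMap 1) = F.map dMap)
    (hcounit : counit ≫ ε F ≫ F.map MonObj.one = F.map nablaMap)
    [IsIso (ε F ≫ F.map (MonObj.one : 𝟙_ _ ⟶ [1]ᶠ))] :
    Δ ≫ (counit ▷ F.obj [2]ᶠ) = (λ_ _).inv := by
  have hw : (MonObj.one ▷ [2]ᶠ) ≫ (finMap 2 ![0] ▷ [2]ᶠ) ≫ MonObj.mul = (λ_ [2]ᶠ).hom := by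
    rw [← comp_whiskerRight_assoc, IsMonHom.one_hom, MonObj.one_mul]
  have hk : (nablaMap ▷ [2]ᶠ) ≫ (finMap 2 ![0] ▷ [2]ᶠ) ≫ MonObj.mul =
      glueMap 1 ≫ finMap 2 ![0, 0, 1] := by
    apply coprod.hom_ext <;>
      simp [glueMap, fin_mul_eq_codiag, monoidalOfHasFiniteCoproducts.whiskerRight,
        coprod.inl_desc, coprod.inr_desc] <;> ext j <;> fin_cases j <;> rfl
  have hd : dMap ≫ finMap 2 ![0, 0, 1] = 𝟙 _ := by
    ext j; fin_cases j <;> rfl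
  rw [← cancel_mono (λ_ _).hom, Iso.inv_hom_id, Category.assoc, (IsIso.eq_comp_inv _).mpr hcounit,
    comp_whiskerRight_assoc, whiskerRight_inv_comp_leftUnitor_hom F MonObj.one _ hw,
    μ_natural_left_assoc, ← F.map_comp, comul_comp_μ_comp_map hΔ hk, hd, F.map_id]

lemma comul_counit_of_segal (hΔ : Δ ≫ μ F [2]ᶠ [2]ᶠ ≫ F.map (glueMap 1) = F.map dMap)
    (hcounit : counit ≫ ε F ≫ F.map MonObj.one = F.map nablaMap)
    [IsIso (ε F ≫ F.map (MonObj.one : 𝟙_ _ ⟶ [1]ᶠ))] :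
    Δ ≫ (F.obj [2]ᶠ ◁ counit) = (ρ_ _).inv := by
  have hw : ([2]ᶠ ◁ MonObj.one) ≫ ([2]ᶠ ◁ finMap 2 ![1]) ≫ MonObj.mul = (ρ_ [2]ᶠ).hom := by
    rw [← MonoidalCategory.whiskerLeft_comp_assoc, IsMonHom.one_hom, MonObj.mul_one]
  have hk : ([2]ᶠ ◁ nablaMap) ≫ ([2]ᶠ ◁ finMap 2 ![1]) ≫ MonObj.mul =
      glueMap 1 ≫ finMap 2 ![0, 1, 1] := by
    apply coprod.hom_ext <;>
      simp [glueMap, fin_mul_eq_codiag, monoidalOfHasFiniteCoproducts.whiskerLeft,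
        coprod.inl_desc, coprod.inr_desc] <;> ext j <;> fin_cases j <;> rfl
  have hd : dMap ≫ finMap 2 ![0, 1, 1] = 𝟙 _ := by
    ext j; fin_cases j <;> rfl
  rw [← cancel_mono (ρ_ _).hom, Iso.inv_hom_id, Category.assoc, (IsIso.eq_comp_inv _).mpr hcounit,
    MonoidalCategory.whiskerLeft_comp_assoc,
    whiskerLeft_inv_comp_rightUnitor_hom F MonObj.one _ hw, μ_natural_right_assoc, ← F.map_comp,
    comul_comp_μ_comp_map hΔ hk, hd, F.map_id]

lemma antipode_left_of_segal (hΔ : Δ ≫ μ F [2]ᶠ [2]ᶠ ≫ F.map (glueMap 1) = F.map dMap)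
    (hcounit : counit ≫ ε F ≫ F.map MonObj.one = F.map nablaMap) :
    Δ ≫ (F.map sMap ▷ F.obj [2]ᶠ) ≫ μ F _ _ ≫ F.map MonObj.mul =
      counit ≫ ε F ≫ F.map MonObj.one := by
  have hk : (sMap ▷ [2]ᶠ) ≫ MonObj.mul = glueMap 1 ≫ finMap 2 ![1, 0, 1] := by
    apply coprod.hom_ext <;>
      simp [glueMap, fin_mul_eq_codiag, monoidalOfHasFiniteCoproducts.whiskerRight,
        coprod.inl_desc, coprod.inr_desc] <;> ext j <;> fin_cases j <;> rfl
  have hd : dMap ≫ finMap 2 ![1, 0, 1] = nablaMap ≫ finMap 2 ![1] := by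
    ext j; fin_cases j <;> rfl
  rw [μ_natural_left_assoc, ← F.map_comp, comul_comp_μ_comp_map hΔ hk, hd,
    counit_comp_one hcounit]

lemma antipode_right_of_segal (hΔ : Δ ≫ μ F [2]ᶠ [2]ᶠ ≫ F.map (glueMap 1) = F.map dMap)
    (hcounit : counit ≫ ε F ≫ F.map MonObj.one = F.map nablaMap) :
    Δ ≫ (F.obj [2]ᶠ ◁ F.map sMap) ≫ μ F _ _ ≫ F.map MonObj.mul =
      counit ≫ ε F ≫ F.map MonObj.one := by
  have hk : ([2]ᶠ ◁ sMap) ≫ MonObj.mul = glueMap 1 ≫ finMap 2 ![0, 1, 0] := by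
    apply coprod.hom_ext <;>
      simp [glueMap, fin_mul_eq_codiag, monoidalOfHasFiniteCoproducts.whiskerLeft,
        coprod.inl_desc, coprod.inr_desc] <;> ext j <;> fin_cases j <;> rfl
  have hd : dMap ≫ finMap 2 ![0, 1, 0] = nablaMap ≫ finMap 2 ![0] := by
    ext j; fin_cases j <;> rfl
  rw [μ_natural_right_assoc, ← F.map_comp, comul_comp_μ_comp_map hΔ hk, hd,
    counit_comp_one hcounit]

lemma isMonHom_counit_of_segal (hcounit : counit ≫ ε F ≫ F.map MonObj.one = F.map nablaMap)
    [IsIso (ε F ≫ F.map (MonObj.one : 𝟙_ _ ⟶ [1]ᶠ))] : IsMonHom counit := by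
  have : IsMonHom (ε F ≫ F.map (MonObj.one : 𝟙_ _ ⟶ [1]ᶠ)) := isMonHom_one (M := F.obj [1]ᶠ)
  have := isMonHom_inv (ε F ≫ F.map (MonObj.one : 𝟙_ _ ⟶ [1]ᶠ))
  rw [(IsIso.eq_comp_inv _).mpr hcounit]
  infer_instance

end SegalComonoid

lemma isMonHom_comul_of_segal {D : Type*} [Category D] [MonoidalCategory D] [BraidedCategory D]
    {F : FintypeCat.{0} ⥤ D} [F.LaxBraided] {Δ : F.obj [2]ᶠ ⟶ F.obj [2]ᶠ ⊗ F.obj [2]ᶠ}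
    (hΔ : Δ ≫ μ F [2]ᶠ [2]ᶠ ≫ F.map (glueMap 1) = F.map dMap)
    [IsIso (μ F [2]ᶠ [2]ᶠ ≫ F.map (glueMap 1))] : IsMonHom Δ := by
  have := isMonHom_inv (μ F [2]ᶠ [2]ᶠ ≫ F.map (glueMap 1))
  rw [(IsIso.eq_comp_inv _).mpr hΔ]
  infer_instance

section Nerve

variable {N : LaxBraidedFunctor FintypeCat.{0} C}

lemma nerveSeg_two :
    nerveSeg N 2 = μ N.toFunctor [2]ᶠ [2]ᶠ ≫ N.map (glueMap 1) := by
  show (nerveH N ◁ 𝟙 (nerveH N)) ≫ μ N.toFunctor [2]ᶠ [2]ᶠ ≫ N.map (glueMap 1) =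
    μ N.toFunctor [2]ᶠ [2]ᶠ ≫ N.map (glueMap 1)
  rw [MonoidalCategory.whiskerLeft_id, Category.id_comp]
  rfl

lemma nerveComul_comp_μ_comp_map_glueMap (hN : NerveCondBr N) :
    nerveComul N hN ≫ μ N.toFunctor [2]ᶠ [2]ᶠ ≫ N.map (glueMap 1) = N.map dMap := by
  have := hN 2
  have h : nerveComul N hN ≫ nerveSeg N 2 = N.map dMap := by
    show (N.map dMap ≫ inv (nerveSeg N 2)) ≫ nerveSeg N 2 = N.map dMap
    rw [Category.assoc, IsIso.inv_hom_id, Category.comp_id]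
  rwa [nerveSeg_two] at h

lemma nerveCounit_comp_nerveSeg_zero (hN : NerveCondBr N) :
    nerveCounit N hN ≫ nerveSeg N 0 = N.map nablaMap := by
  have := hN 0
  show (N.map nablaMap ≫ inv (nerveSeg N 0)) ≫ nerveSeg N 0 = N.map nablaMap
  rw [Category.assoc, IsIso.inv_hom_id, Category.comp_id]

lemma isIso_μ_comp_map_glueMap (hN : NerveCondBr N) :
    IsIso (μ N.toFunctor [2]ᶠ [2]ᶠ ≫ N.map (glueMap 1)) :=
  nerveSeg_two (N := N) ▸ hN 2

lemma isIso_nerveSeg_three (hN : NerveCondBr N) :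
    IsIso ((N.obj [2]ᶠ ◁ (μ N.toFunctor [2]ᶠ [2]ᶠ ≫ N.map (glueMap 1))) ≫
      μ N.toFunctor [2]ᶠ [3]ᶠ ≫ N.map (glueMap 2)) := by
  have h := hN 3
  rwa [nerveSeg, nerveSeg_two] at h

end Nerve

/-- STATEMENT 6: if `N : FinType ⥤ C` is a symmetric lax monoidal functor satisfying the
nerve condition, then `H := N(Fin 2)` with the product `μ`, unit, coproduct `Δ`,
counit `ε` and antipode `S` described above is a Hopf monoid in `C` whose underlying
monoid is commutative. -/
theorem nerve_gives_commutative_hopf_monoid (N : LaxBraidedFunctor FintypeCat.{0} C)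
    (hN : NerveCondBr N) :
    -- the underlying monoid is a commutative monoid object
    ((nerveMul N ▷ nerveH N) ≫ nerveMul N =
        (α_ (nerveH N) (nerveH N) (nerveH N)).hom ≫ (nerveH N ◁ nerveMul N) ≫ nerveMul N) ∧
    ((nerveOne N ▷ nerveH N) ≫ nerveMul N = (λ_ (nerveH N)).hom) ∧
    ((nerveH N ◁ nerveOne N) ≫ nerveMul N = (ρ_ (nerveH N)).hom) ∧
    ((β_ (nerveH N) (nerveH N)).hom ≫ nerveMul N = nerveMul N) ∧
    -- the coproduct and counit form a comonoid object
    (nerveComul N hN ≫ (nerveComul N hN ▷ nerveH N) =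
        nerveComul N hN ≫ (nerveH N ◁ nerveComul N hN) ≫
          (α_ (nerveH N) (nerveH N) (nerveH N)).inv) ∧
    (nerveComul N hN ≫ (nerveCounit N hN ▷ nerveH N) = (λ_ (nerveH N)).inv) ∧
    (nerveComul N hN ≫ (nerveH N ◁ nerveCounit N hN) = (ρ_ (nerveH N)).inv) ∧
    -- bimonoid compatibilities
    (nerveMul N ≫ nerveComul N hN =
        (nerveComul N hN ⊗ₘ nerveComul N hN) ≫
          tensorμ (nerveH N) (nerveH N) (nerveH N) (nerveH N) ≫
          (nerveMul N ⊗ₘ nerveMul N)) ∧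
    (nerveOne N ≫ nerveComul N hN = (λ_ (𝟙_ C)).inv ≫ (nerveOne N ⊗ₘ nerveOne N)) ∧
    (nerveMul N ≫ nerveCounit N hN =
        (nerveCounit N hN ⊗ₘ nerveCounit N hN) ≫ (λ_ (𝟙_ C)).hom) ∧
    (nerveOne N ≫ nerveCounit N hN = 𝟙 (𝟙_ C)) ∧
    -- antipode axioms
    (nerveComul N hN ≫ (nerveAntipode N ▷ nerveH N) ≫ nerveMul N =
        nerveCounit N hN ≫ nerveOne N) ∧
    (nerveComul N hN ≫ (nerveH N ◁ nerveAntipode N) ≫ nerveMul N =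
        nerveCounit N hN ≫ nerveOne N) := by
  -- `Seg₀` is the unit of the monoid `N(Fin 1)`
  have : IsIso (ε N.toFunctor ≫ N.map (MonObj.one : 𝟙_ _ ⟶ [1]ᶠ)) := hN 0
  have := isIso_μ_comp_map_glueMap hN
  have := isIso_nerveSeg_three hN
  have hΔ := nerveComul_comp_μ_comp_map_glueMap hN
  have hε := nerveCounit_comp_nerveSeg_zero hN
  have hΔ_mon := isMonHom_comul_of_segal (F := N.toFunctor) hΔ
  have hε_mon := isMonHom_counit_of_segal (F := N.toFunctor) hε
  exact ⟨MonObj.mul_assoc (N.obj [2]ᶠ), MonObj.one_mul (N.obj [2]ᶠ), MonObj.mul_one (N.obj [2]ᶠ),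
    IsCommMonObj.mul_comm (N.obj [2]ᶠ), comul_assoc_of_segal hΔ, counit_comul_of_segal hΔ hε,
    comul_counit_of_segal hΔ hε, hΔ_mon.mul_hom, hΔ_mon.one_hom, hε_mon.mul_hom, hε_mon.one_hom,
    antipode_left_of_segal hΔ hε, antipode_right_of_segal hΔ hε⟩
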